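/- Let k ≥ 1 and d ≥ 1, and for positive integer z define φ_z(x) = x·(ln(e/x^{1/z}))^{z/2} on (0,1]. Define g : (0,1]^k → ℝ by g(α) = e^{-2∑_i α_i} · ∑_{ℓ=1}^d ∑_{S⊆[k],|S|=ℓ} ∑_{z∈[m]^S, ∑_{i∈S} z_i = d} ∏_{i∈S} φ_{z_i}(α_i). Then g is Schur-concave; in particular, for every α ∈ (0,1]^k, g(α_1,...,α_k) ≤ g(ᾱ,...,ᾱ) where ᾱ = (∑_i α_i)/k. -/

import Mathlib

/-!
With `w = 1 - log x / z` one has `φ_z(x) = x w^{z/2}` and `φ_z' = w^{z/2} - w^{z/2 - 1}/2`, an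
increasing function of `w ≥ 1`; since `w` decreases in `x`, every `φ_z` is nonnegative,
increasing and concave on `(0, 1]`. For two such functions `f, g` and `x ≤ y`, the symmetrised
product `f x * g y + f y * g x` does not decrease under the Robin Hood transfer
`(x, y) ↦ (x + δ, y - δ)` with `x + δ ≤ y - δ`. As `g` is symmetric, `2 g(α) = g(α) + g(α ∘ (i j))`
is a sum of such symmetrised products times nonnegative factors, so `g` does not decrease under
a transfer between coordinates `i` and `j`. Finitely many transfers, each moving one more
coordinate onto the mean, reach the uniform vector.
-/

open Finset

noncomputable def phi (z : ℕ) (x : ℝ) : ℝ :=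
  x * (Real.log (Real.exp 1 / x ^ ((1 : ℝ) / z))) ^ ((z : ℝ) / 2)

/-- The function
`g(α) = e^{-2∑ᵢ αᵢ} ∑_{ℓ=1}^d ∑_{|S|=ℓ} ∑_{z ∈ [m]^S, ∑_{i∈S} zᵢ = d} ∏_{i∈S} φ_{zᵢ}(αᵢ)`,
where the inner sum is encoded by functions `z : Fin k → Fin (m+1)` supported on `S`
with values in `{1,…,m}` on `S`. -/
noncomputable def gfun (k m d : ℕ) (α : Fin k → ℝ) : ℝ :=
  Real.exp (-2 * ∑ i, α i) *
    ∑ ℓ ∈ Finset.Icc 1 d,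
      ∑ S ∈ Finset.univ.filter (fun S : Finset (Fin k) => S.card = ℓ),
        ∑ z ∈ (Finset.univ : Finset (Fin k → Fin (m + 1))).filter
            (fun z => (∀ i, (i ∈ S → 1 ≤ (z i : ℕ)) ∧ (i ∉ S → (z i : ℕ) = 0)) ∧
              ∑ i ∈ S, (z i : ℕ) = d),
          ∏ i ∈ S, phi (z i : ℕ) (α i)

open Real

section Phi

open Set

lemma phi_eq_mul_rpow (z : ℕ) {x : ℝ} (hx : 0 < x) :
    phi z x = x * (1 - log x / z) ^ ((z : ℝ) / 2) := by
  rw [phi, log_div (exp_ne_zero 1) (rpow_pos_of_pos hx _).ne', log_exp, log_rpow hx]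
  ring_nf

lemma one_le_one_sub_log_div (z : ℕ) {x : ℝ} (hx : 0 < x) (hx1 : x ≤ 1) :
    1 ≤ 1 - log x / z := by
  have : log x / z ≤ 0 := div_nonpos_of_nonpos_of_nonneg (log_nonpos hx.le hx1) z.cast_nonneg
  linarith

lemma monotoneOn_rpow_sub_half_rpow_sub_one {c : ℝ} (hc : 0 ≤ c) :
    MonotoneOn (fun s : ℝ => s ^ c - s ^ (c - 1) / 2) (Ici 1) := by
  have hderiv : ∀ s ∈ Ici (1 : ℝ), HasDerivAt (fun s : ℝ => s ^ c - s ^ (c - 1) / 2)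
      (c * s ^ (c - 1) - (c - 1) * s ^ (c - 1 - 1) / 2) s := fun s hs =>
    ((hasDerivAt_rpow_const (Or.inl (by linarith [mem_Ici.1 hs]))).sub
      ((hasDerivAt_rpow_const (Or.inl (by linarith [mem_Ici.1 hs]))).div_const 2))
  refine monotoneOn_of_deriv_nonneg (convex_Ici 1)
    (fun s hs => (hderiv s hs).continuousAt.continuousWithinAt)
    (fun s hs => (hderiv s (interior_subset hs)).differentiableAt.differentiableWithinAt)
    fun s hs => ?_
  rw [interior_Ici] at hs
  have hs1 : 1 < s := hs
  rw [(hderiv s hs1.le).deriv]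
  -- `s^(c-1) = s * s^(c-2)` turns the derivative into `s^(c-2) (c s - (c-1)/2)`
  have hsplit : s ^ (c - 1) = s * s ^ (c - 1 - 1) := by
    conv_lhs => rw [show c - 1 = 1 + (c - 1 - 1) by ring]
    rw [rpow_add (by linarith), rpow_one]
  have hpow : 0 ≤ s ^ (c - 1 - 1) := rpow_nonneg (by linarith) _
  rw [hsplit]
  nlinarith [mul_nonneg (by nlinarith : (0:ℝ) ≤ c * s - (c - 1) / 2) hpow]

noncomputable def phiDeriv (z : ℕ) (x : ℝ) : ℝ :=
  (1 - log x / z) ^ ((z : ℝ) / 2) - (1 - log x / z) ^ ((z : ℝ) / 2 - 1) / 2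

lemma hasDerivAt_phi {z : ℕ} (hz : z ≠ 0) {x : ℝ} (hx : 0 < x) (hx1 : x ≤ 1) :
    HasDerivAt (phi z) (phiDeriv z x) x := by
  have hw : HasDerivAt (fun y => 1 - log y / z) (-(x⁻¹ / z)) x :=
    ((hasDerivAt_log hx.ne').div_const _).const_sub 1
  have hmul := (hasDerivAt_id' x).mul
    (hw.rpow_const (p := (z : ℝ) / 2) (Or.inl (by linarith [one_le_one_sub_log_div z hx hx1])))
  have hphi : phi z =ᶠ[nhds x] fun y => y * (1 - log y / z) ^ ((z : ℝ) / 2) := by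
    filter_upwards [eventually_gt_nhds hx] with y hy
    exact phi_eq_mul_rpow z hy
  refine (hmul.congr_of_eventuallyEq hphi).congr_deriv ?_
  have hz' : (z : ℝ) ≠ 0 := Nat.cast_ne_zero.2 hz
  rw [phiDeriv]
  field_simp
  ring

lemma phiDeriv_le_phiDeriv_of_le (z : ℕ) {x y : ℝ} (hx : 0 < x) (hy1 : y ≤ 1) (hxy : x ≤ y) :
    phiDeriv z y ≤ phiDeriv z x :=
  monotoneOn_rpow_sub_half_rpow_sub_one (by positivity)
    (one_le_one_sub_log_div z (hx.trans_le hxy) hy1)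
    (one_le_one_sub_log_div z hx (hxy.trans hy1)) (by gcongr)

lemma phiDeriv_nonneg (z : ℕ) {x : ℝ} (hx : 0 < x) (hx1 : x ≤ 1) : 0 ≤ phiDeriv z x := by
  have := phiDeriv_le_phiDeriv_of_le z hx le_rfl hx1
  have h1 : phiDeriv z 1 = 1 / 2 := by norm_num [phiDeriv]
  linarith

lemma phi_nonneg (z : ℕ) {x : ℝ} (hx : 0 < x) (hx1 : x ≤ 1) : 0 ≤ phi z x := by
  rw [phi_eq_mul_rpow z hx]
  exact mul_nonneg hx.le (rpow_nonneg (by linarith [one_le_one_sub_log_div z hx hx1]) _)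

lemma phi_monotoneOn {z : ℕ} (hz : z ≠ 0) : MonotoneOn (phi z) (Ioc 0 1) := by
  have hderiv : ∀ x ∈ Ioc (0 : ℝ) 1, HasDerivAt (phi z) (phiDeriv z x) x :=
    fun x hx => hasDerivAt_phi hz hx.1 hx.2
  refine monotoneOn_of_deriv_nonneg (convex_Ioc 0 1)
    (fun x hx => (hderiv x hx).continuousAt.continuousWithinAt)
    (fun x hx => (hderiv x (interior_subset hx)).differentiableAt.differentiableWithinAt)
    fun x hx => ?_
  rw [(hderiv x (interior_subset hx)).deriv]
  exact phiDeriv_nonneg z (interior_subset hx).1 (interior_subset hx).2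

lemma phi_concaveOn {z : ℕ} (hz : z ≠ 0) : ConcaveOn ℝ (Ioc 0 1) (phi z) := by
  have hderiv : ∀ x ∈ Ioc (0 : ℝ) 1, HasDerivAt (phi z) (phiDeriv z x) x :=
    fun x hx => hasDerivAt_phi hz hx.1 hx.2
  refine AntitoneOn.concaveOn_of_deriv (convex_Ioc 0 1)
    (fun x hx => (hderiv x hx).continuousAt.continuousWithinAt)
    (fun x hx => (hderiv x (interior_subset hx)).differentiableAt.differentiableWithinAt)
    fun x hx y hy hxy => ?_
  rw [(hderiv x (interior_subset hx)).deriv, (hderiv y (interior_subset hy)).deriv]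
  rw [interior_Ioc] at hx hy
  exact phiDeriv_le_phiDeriv_of_le z hx.1 hy.2.le hxy

end Phi

section Concave

variable {s : Set ℝ} {f g : ℝ → ℝ} {x y δ : ℝ}

theorem ConcaveOn.add_le_add_shrink (hf : ConcaveOn ℝ s f) (hx : x ∈ s) (hy : y ∈ s)
    (hδ : 0 ≤ δ) (hxy : x + δ ≤ y - δ) : f x + f y ≤ f (x + δ) + f (y - δ) := by
  rcases hδ.eq_or_lt with rfl | hδ
  · simp
  -- `x + δ`, `y - δ` are the convex combinations of `x, y` with weights `(1 - t, t)`, `(t, 1 - t)`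
  set t := δ / (y - x) with ht
  have hyx : 0 < y - x := by linarith
  have ht0 : 0 ≤ t := by positivity
  have ht1 : 0 ≤ 1 - t := by rw [sub_nonneg, ht, div_le_one hyx]; linarith
  have hleft := hf.2 hx hy ht1 ht0 (by ring)
  have hright := hf.2 hx hy ht0 ht1 (by ring)
  simp only [smul_eq_mul] at hleft hright
  rw [show (1 - t) * x + t * y = x + δ by rw [ht]; field_simp; ring] at hleft
  rw [show t * x + (1 - t) * y = y - δ by rw [ht]; field_simp; ring] at hright
  linarith

theorem mul_add_mul_le_of_concaveOn [s.OrdConnected]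
    (hfc : ConcaveOn ℝ s f) (hfm : MonotoneOn f s) (hf0 : ∀ t ∈ s, 0 ≤ f t)
    (hgc : ConcaveOn ℝ s g) (hgm : MonotoneOn g s) (hg0 : ∀ t ∈ s, 0 ≤ g t)
    (hx : x ∈ s) (hy : y ∈ s) (hδ : 0 ≤ δ) (hxy : x + δ ≤ y - δ) :
    f x * g y + f y * g x ≤ f (x + δ) * g (y - δ) + f (y - δ) * g (x + δ) := by
  have ha : x + δ ∈ s := Set.Icc_subset s hx hy ⟨by linarith, by linarith⟩
  have hb : y - δ ∈ s := Set.Icc_subset s hx hy ⟨by linarith, by linarith⟩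
  have hf := hfc.add_le_add_shrink hx hy hδ hxy
  have hg := hgc.add_le_add_shrink hx hy hδ hxy
  have hfb : f (y - δ) ≤ f y := hfm hb hy (by linarith)
  have hgb : g (y - δ) ≤ g y := hgm hb hy (by linarith)
  have hfxb : f x ≤ f (y - δ) := hfm hx hb (by linarith)
  have hgxb : g x ≤ g (y - δ) := hgm hx hb (by linarith)
  nlinarith [mul_le_mul_of_nonneg_right (by linarith : f y - f (y - δ) ≤ f (x + δ) - f x)
      (hg0 _ hb),
    mul_le_mul_of_nonneg_right (by linarith : g y - g (y - δ) ≤ g (x + δ) - g x) (hf0 _ hb),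
    mul_le_mul_of_nonneg_left hgxb (sub_nonneg.2 hfb),
    mul_le_mul_of_nonneg_left hfxb (sub_nonneg.2 hgb)]

end Concave

section RobinHood

variable {ι : Type*} [DecidableEq ι]

def robinHood (γ : ι → ℝ) (i j : ι) (δ : ℝ) : ι → ℝ :=
  γ + Pi.single i δ - Pi.single j δ

variable {γ : ι → ℝ} {i j : ι} {δ : ℝ}

@[simp] lemma robinHood_apply_left (hij : i ≠ j) : robinHood γ i j δ i = γ i + δ := by
  simp [robinHood, hij]

@[simp] lemma robinHood_apply_right (hij : i ≠ j) : robinHood γ i j δ j = γ j - δ := by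
  simp [robinHood, hij.symm]

lemma robinHood_apply_of_ne {t : ι} (hti : t ≠ i) (htj : t ≠ j) :
    robinHood γ i j δ t = γ t := by
  simp [robinHood, hti, htj]

variable [Fintype ι]

@[simp] lemma sum_robinHood : ∑ t, robinHood γ i j δ t = ∑ t, γ t := by
  simp [robinHood, sum_add_distrib, sum_sub_distrib]

lemma prod_add_prod_swap_le_robinHood {s : Set ℝ} [s.OrdConnected] {F : ι → ℝ → ℝ}
    (hc : ∀ t, ConcaveOn ℝ s (F t)) (hm : ∀ t, MonotoneOn (F t) s)
    (h0 : ∀ t, ∀ x ∈ s, 0 ≤ F t x) (hγ : ∀ t, γ t ∈ s) (hij : i ≠ j) (hδ : 0 ≤ δ)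
    (hγij : γ i + δ ≤ γ j - δ) :
    ∏ t, F t (γ t) + ∏ t, F t (γ (Equiv.swap i j t)) ≤
      ∏ t, F t (robinHood γ i j δ t) + ∏ t, F t (robinHood γ i j δ (Equiv.swap i j t)) := by
  have hsplit (η : ι → ℝ) (hη : ∀ t, t ≠ i → t ≠ j → η t = γ t) :
      ∏ t, F t (η t) = F i (η i) * F j (η j) * ∏ t ∈ {i, j}ᶜ, F t (γ t) := by
    rw [← prod_mul_prod_compl {i, j}, prod_pair hij]
    refine congrArg _ (prod_congr rfl fun t ht => ?_)
    simp only [Finset.mem_compl, Finset.mem_insert, Finset.mem_singleton, not_or] at ht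
    rw [hη t ht.1 ht.2]
  rw [hsplit γ fun _ _ _ => rfl,
    hsplit (fun t => γ (Equiv.swap i j t)) fun t hti htj => by
      rw [Equiv.swap_apply_of_ne_of_ne hti htj],
    hsplit (robinHood γ i j δ) fun t hti htj => robinHood_apply_of_ne hti htj,
    hsplit (fun t => robinHood γ i j δ (Equiv.swap i j t)) fun t hti htj => by
      rw [Equiv.swap_apply_of_ne_of_ne hti htj, robinHood_apply_of_ne hti htj]]
  simp only [Equiv.swap_apply_left, Equiv.swap_apply_right, robinHood_apply_left hij,
    robinHood_apply_right hij]
  have hrest : 0 ≤ ∏ t ∈ {i, j}ᶜ, F t (γ t) := prod_nonneg fun t _ => h0 t _ (hγ t)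
  have key := mul_add_mul_le_of_concaveOn (hc i) (hm i) (h0 i) (hc j) (hm j) (h0 j)
    (hγ i) (hγ j) hδ hγij
  rw [← add_mul, ← add_mul]
  exact mul_le_mul_of_nonneg_right key hrest

theorem le_apply_const_of_robinHood {s : Set ℝ} [s.OrdConnected] {G : (ι → ℝ) → ℝ}
    (hG : ∀ γ : ι → ℝ, (∀ t, γ t ∈ s) → ∀ i j, i ≠ j → ∀ δ, 0 ≤ δ → γ i + δ ≤ γ j - δ →
      G γ ≤ G (robinHood γ i j δ))
    {μ : ℝ} (hγ : ∀ t, γ t ∈ s) (hsum : ∑ t, γ t = Fintype.card ι * μ) :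
    G γ ≤ G fun _ => μ := by
  suffices ∀ n, ∀ γ : ι → ℝ, (∀ t, γ t ∈ s) → ∑ t, γ t = Fintype.card ι * μ →
      (univ.filter fun t => γ t ≠ μ).card = n → G γ ≤ G fun _ => μ from
    this _ γ hγ hsum rfl
  intro n
  induction n using Nat.strong_induction_on with | _ n ih => ?_
  intro γ hγ hsum hn
  by_cases hconst : ∀ t, γ t = μ
  · rw [show γ = fun _ => μ from funext hconst]
  have hsum' : ∑ t, γ t = ∑ _t : ι, μ := by simp [hsum]
  obtain ⟨i, hi⟩ : ∃ i, γ i < μ := by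
    by_contra! h
    exact hconst fun t =>
      ((sum_eq_sum_iff_of_le fun t _ => h t).1 hsum'.symm t (mem_univ t)).symm
  obtain ⟨j, hj⟩ : ∃ j, μ < γ j := by
    by_contra! h
    exact hconst fun t => (sum_eq_sum_iff_of_le fun t _ => h t).1 hsum' t (mem_univ t)
  have hij : i ≠ j := by rintro rfl; linarith
  set δ := min (μ - γ i) (γ j - μ) with hδ_def
  have hδ : 0 ≤ δ := le_min (by linarith) (by linarith)
  have hδij : γ i + δ ≤ γ j - δ := by
    linarith [min_le_left (μ - γ i) (γ j - μ), min_le_right (μ - γ i) (γ j - μ)]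
  have hγ' : ∀ t, robinHood γ i j δ t ∈ s := by
    intro t
    have hIcc := Set.Icc_subset s (hγ i) (hγ j)
    by_cases hti : t = i
    · subst hti
      exact hIcc ⟨by simp [hij, hδ], by simp [hij]; linarith⟩
    by_cases htj : t = j
    · subst htj
      exact hIcc ⟨by simp [hij]; linarith, by simp [hij, hδ]⟩
    rw [robinHood_apply_of_ne hti htj]
    exact hγ t
  have hfewer : (univ.filter fun t => robinHood γ i j δ t ≠ μ).card < n := by
    rw [← hn]
    refine card_lt_card ((Finset.ssubset_iff_of_subset fun t ht => ?_).2 ?_)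
    · simp only [mem_filter, mem_univ, true_and] at ht ⊢
      by_cases hti : t = i
      · exact hti ▸ hi.ne
      by_cases htj : t = j
      · exact htj ▸ hj.ne'
      rwa [robinHood_apply_of_ne hti htj] at ht
    · rcases min_choice (μ - γ i) (γ j - μ) with h | h
      · exact ⟨i, by simp [hi.ne], by simp [hij, hδ_def, h]⟩
      · exact ⟨j, by simp [hj.ne'], by simp [hij, hδ_def, h]⟩
  exact (hG γ hγ i j hij δ hδ hδij).trans
    (ih _ hfewer _ hγ' (by rw [sum_robinHood, hsum]) rfl)

end RobinHood

noncomputable def gfunSum (k m d : ℕ) (α : Fin k → ℝ) : ℝ :=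
  ∑ ℓ ∈ Finset.Icc 1 d,
    ∑ S ∈ Finset.univ.filter (fun S : Finset (Fin k) => S.card = ℓ),
      ∑ z ∈ (Finset.univ : Finset (Fin k → Fin (m + 1))).filter
          (fun z => (∀ i, (i ∈ S → 1 ≤ (z i : ℕ)) ∧ (i ∉ S → (z i : ℕ) = 0)) ∧
            ∑ i ∈ S, (z i : ℕ) = d),
        ∏ i ∈ S, phi (z i : ℕ) (α i)

lemma gfun_eq_exp_mul_gfunSum (k m d : ℕ) (α : Fin k → ℝ) :
    gfun k m d α = exp (-2 * ∑ i, α i) * gfunSum k m d α :=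
  rfl

lemma gfunSum_comp_perm (k m d : ℕ) (σ : Equiv.Perm (Fin k)) (γ : Fin k → ℝ) :
    gfunSum k m d (γ ∘ σ) = gfunSum k m d γ := by
  refine sum_congr rfl fun ℓ _ => ?_
  rw [sum_sigma', sum_sigma']
  refine sum_nbij' (fun p => ⟨p.1.map σ.toEmbedding, p.2 ∘ σ.symm⟩)
    (fun p => ⟨p.1.map σ.symm.toEmbedding, p.2 ∘ σ⟩) ?_ ?_ ?_ ?_ ?_
  iterate 2
    rintro ⟨S, z⟩ hp
    simp only [mem_sigma, mem_filter, mem_univ, true_and] at hp ⊢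
    obtain ⟨hcard, hsupp, hsum⟩ := hp
    exact ⟨by simpa using hcard, fun t => by simpa using hsupp _, by simpa using hsum⟩
  · rintro ⟨S, z⟩ -
    ext <;> simp [Function.comp_assoc]
  · rintro ⟨S, z⟩ -
    ext <;> simp [Function.comp_assoc]
  · rintro ⟨S, z⟩ -
    simp

lemma prod_phi_add_prod_phi_swap_le_robinHood {ι : Type*} [Fintype ι] [DecidableEq ι]
    {S : Finset ι} {z : ι → ℕ} (hz : ∀ t ∈ S, z t ≠ 0) {γ : ι → ℝ}
    (hγ : ∀ t, γ t ∈ Set.Ioc 0 1) {i j : ι} (hij : i ≠ j) {δ : ℝ} (hδ : 0 ≤ δ)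
    (hγij : γ i + δ ≤ γ j - δ) :
    ∏ t ∈ S, phi (z t) (γ t) + ∏ t ∈ S, phi (z t) (γ (Equiv.swap i j t)) ≤
      ∏ t ∈ S, phi (z t) (robinHood γ i j δ t) +
        ∏ t ∈ S, phi (z t) (robinHood γ i j δ (Equiv.swap i j t)) := by
  -- extend the product to all of `ι` by the factor `1` outside `S`
  set F : ι → ℝ → ℝ := fun t => if t ∈ S then phi (z t) else fun _ => 1
  have hprod (η : ι → ℝ) : ∏ t ∈ S, phi (z t) (η t) = ∏ t, F t (η t) := by
    rw [← univ_inter S, ← prod_ite_mem]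
    exact prod_congr rfl fun t _ => by split_ifs <;> simp [F, *]
  have hc (t : ι) : ConcaveOn ℝ (Set.Ioc 0 1) (F t) := by
    by_cases ht : t ∈ S
    · simpa [F, ht] using phi_concaveOn (hz t ht)
    · simpa [F, ht] using concaveOn_const (1 : ℝ) (convex_Ioc (0 : ℝ) 1)
  have hm (t : ι) : MonotoneOn (F t) (Set.Ioc 0 1) := by
    by_cases ht : t ∈ S
    · simpa [F, ht] using phi_monotoneOn (hz t ht)
    · simpa [F, ht] using monotoneOn_const (c := (1 : ℝ)) (s := Set.Ioc (0 : ℝ) 1)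
  have h0 (t : ι) : ∀ x ∈ Set.Ioc (0 : ℝ) 1, 0 ≤ F t x := fun x hx => by
    by_cases ht : t ∈ S
    · simpa [F, ht] using phi_nonneg (z t) hx.1 hx.2
    · simp [F, ht]
  rw [hprod, hprod, hprod, hprod]
  exact prod_add_prod_swap_le_robinHood hc hm h0 hγ hij hδ hγij

lemma gfunSum_le_robinHood {k m d : ℕ} {γ : Fin k → ℝ} (hγ : ∀ t, γ t ∈ Set.Ioc 0 1)
    {i j : Fin k} (hij : i ≠ j) {δ : ℝ} (hδ : 0 ≤ δ) (hγij : γ i + δ ≤ γ j - δ) :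
    gfunSum k m d γ ≤ gfunSum k m d (robinHood γ i j δ) := by
  have hsymm : gfunSum k m d γ + gfunSum k m d (γ ∘ Equiv.swap i j) ≤
      gfunSum k m d (robinHood γ i j δ) +
        gfunSum k m d (robinHood γ i j δ ∘ Equiv.swap i j) := by
    simp only [gfunSum, ← sum_add_distrib]
    refine sum_le_sum fun ℓ _ => sum_le_sum fun S _ => sum_le_sum fun z hz => ?_
    have hz0 : ∀ t ∈ S, (z t : ℕ) ≠ 0 := fun t ht =>
      Nat.one_le_iff_ne_zero.1 (((mem_filter.1 hz).2.1 t).1 ht)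
    exact prod_phi_add_prod_phi_swap_le_robinHood hz0 hγ hij hδ hγij
  rw [gfunSum_comp_perm, gfunSum_comp_perm] at hsymm
  linarith

lemma gfun_le_robinHood {k m d : ℕ} {γ : Fin k → ℝ} (hγ : ∀ t, γ t ∈ Set.Ioc 0 1)
    {i j : Fin k} (hij : i ≠ j) {δ : ℝ} (hδ : 0 ≤ δ) (hγij : γ i + δ ≤ γ j - δ) :
    gfun k m d γ ≤ gfun k m d (robinHood γ i j δ) := by
  rw [gfun_eq_exp_mul_gfunSum, gfun_eq_exp_mul_gfunSum, sum_robinHood]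
  gcongr
  exact gfunSum_le_robinHood hγ hij hδ hγij

theorem stmt15_general (k m d : ℕ) (hk : 0 < k)
    (α : Fin k → ℝ) (hα : ∀ i, α i ∈ Set.Ioc (0 : ℝ) 1) :
    gfun k m d α ≤ gfun k m d (fun _ => (∑ i, α i) / k) :=
  le_apply_const_of_robinHood
    (fun _ hγ _ _ hij _ hδ hγij => gfun_le_robinHood hγ hij hδ hγij) hα
    (by rw [Fintype.card_fin]; field_simp)

/-- `g` is Schur-concave; in particular its value at `α` is at most its value at the
uniform vector `(ᾱ, …, ᾱ)` with `ᾱ = (∑ᵢ αᵢ)/k`. -/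
theorem stmt15 (k m d : ℕ) (hk : 0 < k) (hm : 0 < m) (hd : 0 < d)
    (α : Fin k → ℝ) (hα : ∀ i, α i ∈ Set.Ioc (0 : ℝ) 1) :
    gfun k m d α ≤ gfun k m d (fun _ => (∑ i, α i) / k) :=
  stmt15_general k m d hk α hα
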